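/- For a prime p with s ≥ 1 and gcd(m, p^s) = 1, Σ_{k=1}^{p^s} gcd(k, p^s)·e^{-2πikm/p^s} = φ(p^s) = p^s - p^{s-1}. -/

import Mathlib

/-!
Write `n = p ^ s` and let `ζ = exp (-2πi m / n)`, a primitive `n`-th root of unity since `m` is
coprime to `n`. Expanding `gcd(k, n) = ∑_{d ∣ gcd(k, n)} φ(d)` and swapping the sums gives
`∑_{d ∣ n} φ(d) ∑_{d ∣ k} ζ^k`. The inner sum is a full geometric sum of the primitive
`(n / d)`-th root `ζ^d`, so it vanishes unless `d = n`, leaving `φ(n)`.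
-/

open Finset

theorem Finset.sum_Icc_one_eq_sum_range {M : Type*} [AddCommMonoid M] {f : ℕ → M} {n : ℕ}
    (h : f n = f 0) : ∑ k ∈ Icc 1 n, f k = ∑ k ∈ range n, f k := by
  rcases Nat.eq_zero_or_pos n with rfl | hn
  · simp
  rw [← Ico_add_one_right_eq_Icc, sum_Ico_succ_top hn, h, ← Nat.Ico_zero_eq_range,
    sum_eq_sum_Ico_succ_bot hn, add_comm]

theorem Finset.sum_range_filter_dvd {M : Type*} [AddCommMonoid M] (f : ℕ → M) {d n : ℕ}
    (hd : d ∣ n) : ∑ k ∈ range n with d ∣ k, f k = ∑ t ∈ range (n / d), f (d * t) := by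
  obtain ⟨e, rfl⟩ := hd
  rcases Nat.eq_zero_or_pos d with rfl | hd
  · simp
  have himage : {k ∈ range (d * e) | d ∣ k} = (range e).image (d * ·) := by
    ext k
    simp only [mem_filter, mem_range, mem_image]
    constructor
    · rintro ⟨hk, t, rfl⟩
      exact ⟨t, Nat.lt_of_mul_lt_mul_left hk, rfl⟩
    · rintro ⟨t, ht, rfl⟩
      exact ⟨Nat.mul_lt_mul_of_pos_left ht hd, dvd_mul_right d t⟩
  rw [himage, sum_image fun a _ b _ h => Nat.eq_of_mul_eq_mul_left hd h,
    Nat.mul_div_cancel_left e hd]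

namespace IsPrimitiveRoot

variable {R : Type*} [CommRing R] [IsDomain R] {ζ : R} {n : ℕ}

theorem sum_range_filter_dvd_pow (hζ : IsPrimitiveRoot ζ n) {d : ℕ} (hd : d ∈ n.divisors) :
    ∑ k ∈ range n with d ∣ k, ζ ^ k = if d = n then 1 else 0 := by
  obtain ⟨hdn, hn⟩ := Nat.mem_divisors.1 hd
  have hd0 : d ≠ 0 := Nat.pos_iff_ne_zero.1 (Nat.pos_of_mem_divisors hd)
  rw [sum_range_filter_dvd _ hdn]
  simp only [pow_mul]
  split_ifs with h
  · simp [h, Nat.div_self (Nat.pos_of_ne_zero hn)]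
  · refine (hζ.pow_of_dvd hd0 hdn).geom_sum_eq_zero ?_
    have hpos : 0 < n / d := Nat.div_pos (Nat.divisor_le hd) (Nat.pos_of_ne_zero hd0)
    have hne : n / d ≠ 1 := fun h1 => h (Nat.eq_of_dvd_of_div_eq_one hdn h1)
    omega

theorem sum_range_gcd_mul_pow (hζ : IsPrimitiveRoot ζ n) :
    ∑ k ∈ range n, (n.gcd k : R) * ζ ^ k = n.totient := by
  rcases eq_or_ne n 0 with rfl | hn
  · simp
  have hgcd (k : ℕ) : (n.gcd k : R) = ∑ d ∈ n.divisors with d ∣ k, (d.totient : R) := by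
    rw [← Nat.sum_totient (n.gcd k)]
    push_cast
    congr 1
    ext d
    simp [Nat.dvd_gcd_iff, hn, and_comm]
  calc ∑ k ∈ range n, (n.gcd k : R) * ζ ^ k
      = ∑ d ∈ n.divisors, (d.totient : R) * ∑ k ∈ range n with d ∣ k, ζ ^ k := by
        simp_rw [hgcd, sum_mul, sum_filter, mul_sum]
        rw [sum_comm]
        simp only [mul_ite, mul_zero]
    _ = n.totient := by
        rw [sum_congr rfl fun d hd => by rw [hζ.sum_range_filter_dvd_pow hd]]
        simp [hn]

end IsPrimitiveRoot

theorem dft_gcd_prime_power_coprime (p s m : ℕ) (hp : p.Prime) (hs : 1 ≤ s)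
    (hm : Nat.gcd m (p ^ s) = 1) :
    (∑ k ∈ Finset.Icc 1 (p ^ s), (Nat.gcd k (p ^ s) : ℂ) *
        Complex.exp (-(2 * Real.pi * Complex.I * k * m / (p ^ s))) =
      (Nat.totient (p ^ s) : ℂ)) ∧
    (Nat.totient (p ^ s) : ℂ) = (p : ℂ) ^ s - (p : ℂ) ^ (s - 1) := by
  set ζ := (Complex.exp (2 * Real.pi * Complex.I * (m / (p ^ s : ℕ))))⁻¹ with hζ_def
  have hζ : IsPrimitiveRoot ζ (p ^ s) :=
    (Complex.isPrimitiveRoot_exp_of_coprime m _ (pow_ne_zero s hp.ne_zero) hm).inv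
  have hterm (k : ℕ) : Complex.exp (-(2 * Real.pi * Complex.I * k * m / (p ^ s))) = ζ ^ k := by
    rw [hζ_def, inv_pow, ← Complex.exp_nat_mul, ← Complex.exp_neg]
    push_cast
    ring_nf
  constructor
  · simp_rw [hterm, Nat.gcd_comm _ (p ^ s)]
    rw [sum_Icc_one_eq_sum_range (by simp [hζ.pow_eq_one]), hζ.sum_range_gcd_mul_pow]
  · obtain ⟨t, rfl⟩ := Nat.exists_eq_add_of_le' hs
    rw [Nat.totient_prime_pow_succ hp, Nat.add_sub_cancel]
    push_cast [Nat.cast_sub hp.one_le]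
    ring
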